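/- Let C be an n×n upper triangular matrix over a commutative ring with ones on its main diagonal, and let B = C + Cᵀ be its symmetrization. Then −C⁻¹ Cᵀ = r^B_1 · r^B_2 · ⋯ · r^B_n, where (r^B_i)_{st} = δ_{st} − δ_{si}B_{it}. -/

import Mathlib

/-!
Right multiplication by `r^B_i` subtracts from a matrix `M` the product of its `i`-th column with
the `i`-th row of `B`. Starting from `M = C` and multiplying by `r^B_1, …, r^B_k` one therefore gets
`C - topRows B k`, where `topRows B k` keeps the first `k` rows of `B`. Its `(k+1)`-st column is
the unit vector `e_{k+1}`, because `C` is unitriangular and `B_{sk} = C_{sk} + C_{ks}`, so the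
next factor `r^B_{k+1}` just moves row `k+1` of `B` into `topRows B`. For `k = n`
this gives `C r^B_1 ⋯ r^B_n = C - B = -Cᵀ`, and `C` is invertible since `det C = 1`.
-/

open Matrix

/-- The matrix `r^B_i`: the identity with the `i`-th row of `B` subtracted. -/
def reflMat {n : ℕ} {R : Type*} [CommRing R] (B : Matrix (Fin n) (Fin n) R) (i : Fin n) :
    Matrix (Fin n) (Fin n) R :=
  Matrix.of fun s t => (if s = t then (1 : R) else 0) - (if s = i then B i t else 0)

section

variable {n : ℕ} {R : Type*} [CommRing R]

lemma mul_reflMat (M B : Matrix (Fin n) (Fin n) R) (i : Fin n) :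
    M * reflMat B i = of fun s t => M s t - M s i * B i t := by
  ext s t
  simp [reflMat, mul_apply, mul_sub, Finset.sum_sub_distrib]

def topRows (B : Matrix (Fin n) (Fin n) R) (k : ℕ) : Matrix (Fin n) (Fin n) R :=
  of fun s t => if (s : ℕ) < k then B s t else 0

lemma topRows_zero (B : Matrix (Fin n) (Fin n) R) : topRows B 0 = 0 := by
  ext s t
  simp [topRows]

lemma topRows_of_le (B : Matrix (Fin n) (Fin n) R) {k : ℕ} (hk : n ≤ k) : topRows B k = B := by
  ext s t
  simp [topRows, s.isLt.trans_le hk]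

lemma topRows_succ_apply (B : Matrix (Fin n) (Fin n) R) (k : ℕ) (s t : Fin n) :
    topRows B (k + 1) s t = topRows B k s t + if (s : ℕ) = k then B s t else 0 := by
  simp only [topRows, of_apply]
  split_ifs <;> first | omega | simp

variable (C : Matrix (Fin n) (Fin n) R) (hdiag : ∀ i, C i i = 1)
  (hupper : ∀ i j : Fin n, j < i → C i j = 0)
include hdiag hupper

lemma det_eq_one_of_upper_unitriangular : C.det = 1 := by
  rw [det_of_isUpperTriangular (fun i j hij => hupper i j hij)]
  simp [hdiag]

lemma sub_topRows_apply_self_col (k s : Fin n) :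
    (C - topRows (C + Cᵀ) k) s k = if s = k then 1 else 0 := by
  rcases lt_trichotomy s k with h | rfl | h
  · simp [topRows, h, h.ne, hupper k s h]
  · simp [topRows, hdiag]
  · simp [topRows, h.ne', h.not_gt, hupper s k h]

lemma mul_prod_take_reflMat {k : ℕ} (hk : k ≤ n) :
    C * ((List.ofFn fun i : Fin n => reflMat (C + Cᵀ) i).take k).prod = C - topRows (C + Cᵀ) k := by
  induction k with
  | zero => simp [topRows_zero]
  | succ k ih =>
    have hkn : k < n := hk
    rw [List.prod_take_succ _ _ (by simpa using hkn), ← mul_assoc, ih hkn.le, List.getElem_ofFn,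
      mul_reflMat]
    ext s t
    rw [of_apply, sub_topRows_apply_self_col C hdiag hupper ⟨k, hkn⟩ s, Matrix.sub_apply,
      Matrix.sub_apply, topRows_succ_apply]
    by_cases hs : s = ⟨k, hkn⟩
    · subst hs
      rw [if_pos rfl, if_pos rfl]
      ring
    · simp [hs, Fin.ext_iff.not.mp hs]

lemma mul_prod_reflMat :
    C * (List.ofFn fun i : Fin n => reflMat (C + Cᵀ) i).prod = -Cᵀ := by
  have h := mul_prod_take_reflMat C hdiag hupper le_rfl
  rw [List.take_of_length_le (by simp), topRows_of_le _ le_rfl] at h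
  rw [h, sub_add_cancel_left]

end

/-- For `C` upper triangular with ones on the diagonal and `B = C + Cᵀ` its symmetrization,
`-C⁻¹ Cᵀ = r^B_1 ⋯ r^B_n`. -/
theorem neg_inv_mul_transpose_eq_prod_reflMat
    {n : ℕ} {R : Type*} [CommRing R] (C : Matrix (Fin n) (Fin n) R)
    (hdiag : ∀ i, C i i = 1) (hupper : ∀ i j : Fin n, j < i → C i j = 0) :
    -(C⁻¹ * Cᵀ) = (List.ofFn fun i : Fin n => reflMat (C + Cᵀ) i).prod := by
  have hC : IsUnit C.det := by simp [det_eq_one_of_upper_unitriangular C hdiag hupper]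
  rw [← mul_neg, ← mul_prod_reflMat C hdiag hupper, ← mul_assoc, nonsing_inv_mul C hC, one_mul]
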